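/- arXiv:1301.4534 — 2 statements merged into one kernel-verified Lean document; each statement's English description precedes it below -/
import Mathlib

section
/- Let u, f, g : ℝ² → ℝ be C^∞ functions with f_tt = f_xx and g_tt = g_xx everywhere, let ε, c1 ∈ ℝ, and set φ(x,t) = (3/4)·c1·t·u(x,t)² + (1/2)·t·f(x,t)·u(x,t) + g(x,t) and w = c1·u + f + ε·φ. Then for all (x,t): w_tt − w_xx − ε·[D_t(u·w) + t·D_t(u_t·w) − t·D_x(u_x·w)] = (c1 + ε·((1/2)·c1·t·u − (1/2)·t·f))·(u_tt − u_xx) + ε·c1·(u·u_t + (1/2)·t·u_t² − (1/2)·t·u_x²) − ε²·[D_t(u·φ) + t·D_t(u_t·φ) − t·D_x(u_x·φ)]. Consequently w exhibits approximate nonlinear self-adjointness of the perturbed wave equation u_tt − u_xx + ε·(u·u_t + (1/2)·t·u_t² − (1/2)·t·u_x²) = 0. -/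
/-- Partial derivative with respect to the first variable `x`. -/
noncomputable def pdx (f : ℝ → ℝ → ℝ) : ℝ → ℝ → ℝ := fun x t => deriv (fun y => f y t) x

/-- Partial derivative with respect to the second variable `t`. -/
noncomputable def pdt (f : ℝ → ℝ → ℝ) : ℝ → ℝ → ℝ := fun x t => deriv (fun s => f x s) t

lemma deriv_hmul' (c : ℝ) : deriv (HMul.hMul c) = fun _ => c := by
  funext y
  simpa using (((hasDerivAt_id y).const_mul c).deriv)

lemma sliceT' {h : ℝ → ℝ → ℝ} (hh : ContDiff ℝ (⊤:ℕ∞) (Function.uncurry h)) (x : ℝ) :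
    ContDiff ℝ (⊤:ℕ∞) (fun s => h x s) := hh.comp (ContDiff.prodMk contDiff_const contDiff_id : ContDiff ℝ (⊤:ℕ∞) (fun s : ℝ => (x, s)))

lemma sliceX' {h : ℝ → ℝ → ℝ} (hh : ContDiff ℝ (⊤:ℕ∞) (Function.uncurry h)) (t : ℝ) :
    ContDiff ℝ (⊤:ℕ∞) (fun y => h y t) := hh.comp (ContDiff.prodMk contDiff_id contDiff_const : ContDiff ℝ (⊤:ℕ∞) (fun y : ℝ => (y, t)))

set_option maxHeartbeats 4000000 in
/-- With `f`, `g` solving the wave equation, `φ = (3/4)c1·t·u² + (1/2)t·f·u + g` and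
`w = c1·u + f + ε·φ`, the adjoint expression
`w_tt − w_xx − ε·[D_t(u·w) + t·D_t(u_t·w) − t·D_x(u_x·w)]` of the perturbed wave equation
`u_tt − u_xx + ε(u·u_t + (1/2)t·u_t² − (1/2)t·u_x²) = 0` equals
`(c1 + ε((1/2)c1·t·u − (1/2)t·f))·(u_tt − u_xx)
 + ε·c1·(u·u_t + (1/2)t·u_t² − (1/2)t·u_x²)
 − ε²·[D_t(u·φ) + t·D_t(u_t·φ) − t·D_x(u_x·φ)]`,
exhibiting approximate nonlinear self-adjointness of that equation. -/
theorem stmt5 (u f g : ℝ → ℝ → ℝ)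
    (hu : ContDiff ℝ (⊤ : ℕ∞) (Function.uncurry u)) (hf : ContDiff ℝ (⊤ : ℕ∞) (Function.uncurry f))
    (hg : ContDiff ℝ (⊤ : ℕ∞) (Function.uncurry g))
    (hfw : ∀ x t : ℝ, pdt (pdt f) x t = pdx (pdx f) x t)
    (hgw : ∀ x t : ℝ, pdt (pdt g) x t = pdx (pdx g) x t)
    (ε c1 : ℝ) (φ w : ℝ → ℝ → ℝ)
    (hφ : ∀ x t : ℝ,
      φ x t = (3/4) * c1 * t * (u x t) ^ 2 + (1/2) * t * f x t * u x t + g x t)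
    (hw : ∀ x t : ℝ, w x t = c1 * u x t + f x t + ε * φ x t) :
    ∀ x t : ℝ,
      pdt (pdt w) x t - pdx (pdx w) x t
        - ε * (pdt (fun x t => u x t * w x t) x t
            + t * pdt (fun x t => pdt u x t * w x t) x t
            - t * pdx (fun x t => pdx u x t * w x t) x t)
        = (c1 + ε * ((1/2) * c1 * t * u x t - (1/2) * t * f x t))
            * (pdt (pdt u) x t - pdx (pdx u) x t)
          + ε * c1 * (u x t * pdt u x t + (1/2) * t * (pdt u x t) ^ 2
              - (1/2) * t * (pdx u x t) ^ 2)
          - ε ^ 2 * (pdt (fun x t => u x t * φ x t) x t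
              + t * pdt (fun x t => pdt u x t * φ x t) x t
              - t * pdx (fun x t => pdx u x t * φ x t) x t) := by
  have hu' : ContDiff ℝ (⊤:ℕ∞) (Function.uncurry u) := hu.of_le (by simp)
  have hf' : ContDiff ℝ (⊤:ℕ∞) (Function.uncurry f) := hf.of_le (by simp)
  have hg' : ContDiff ℝ (⊤:ℕ∞) (Function.uncurry g) := hg.of_le (by simp)
  have hφ' : φ = fun a b =>
      (3/4) * c1 * b * (u a b) ^ 2 + (1/2) * b * f a b * u a b + g a b :=
    funext fun a => funext fun b => hφ a b
  subst hφ'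
  have hw' : w = fun a b => c1 * u a b + f a b + ε *
      ((3/4) * c1 * b * (u a b) ^ 2 + (1/2) * b * f a b * u a b + g a b) :=
    funext fun a => funext fun b => hw a b
  subst hw'
  intro x t
  have Hf := hfw x t
  have Hg := hgw x t
  have d1 : Differentiable ℝ (fun s => u x s) :=
    (sliceT' hu' x).differentiable (by simp)
  have d2 : Differentiable ℝ (deriv (fun s => u x s)) :=
    ((contDiff_infty_iff_deriv.mp (sliceT' hu' x)).2).differentiable (by simp)
  have d3 : Differentiable ℝ (fun s => f x s) :=
    (sliceT' hf' x).differentiable (by simp)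
  have d4 : Differentiable ℝ (deriv (fun s => f x s)) :=
    ((contDiff_infty_iff_deriv.mp (sliceT' hf' x)).2).differentiable (by simp)
  have d5 : Differentiable ℝ (fun s => g x s) :=
    (sliceT' hg' x).differentiable (by simp)
  have d6 : Differentiable ℝ (deriv (fun s => g x s)) :=
    ((contDiff_infty_iff_deriv.mp (sliceT' hg' x)).2).differentiable (by simp)
  have d7 : Differentiable ℝ (fun y => u y t) :=
    (sliceX' hu' t).differentiable (by simp)
  have d8 : Differentiable ℝ (deriv (fun y => u y t)) :=
    ((contDiff_infty_iff_deriv.mp (sliceX' hu' t)).2).differentiable (by simp)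
  have d9 : Differentiable ℝ (fun y => f y t) :=
    (sliceX' hf' t).differentiable (by simp)
  have d10 : Differentiable ℝ (deriv (fun y => f y t)) :=
    ((contDiff_infty_iff_deriv.mp (sliceX' hf' t)).2).differentiable (by simp)
  have d11 : Differentiable ℝ (fun y => g y t) :=
    (sliceX' hg' t).differentiable (by simp)
  have d12 : Differentiable ℝ (deriv (fun y => g y t)) :=
    ((contDiff_infty_iff_deriv.mp (sliceX' hg' t)).2).differentiable (by simp)
  simp only [pdt, pdx] at Hf Hg ⊢
  have Hf2 : deriv (deriv (f x)) t = deriv (deriv fun y => f y t) x := Hf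
  have Hg2 : deriv (deriv (g x)) t = deriv (deriv fun y => g y t) x := Hg
  simp (disch := fun_prop) [deriv_add, deriv_mul, deriv_fun_pow, deriv_hmul'] at Hf2 Hg2 ⊢
  rw [Hf2, Hg2]
  ring
end

section
/- Let ε ∈ ℝ, let u : ℝ² → ℝ be a C^∞ solution of the perturbed nonlinear wave equation u_tt − (u·u_x)_x + ε·u·u_t = 0 on ℝ² (i.e., u_tt = u_x² + u·u_xx − ε·u·u_t), and let w : ℝ² → ℝ be ANY C^∞ function. Define T^t = w_t·(u + (1/2)·x·u_x + t·u_t) + (1/2)·x·w_x·u_t + t·w_x·u·u_x − (3/2)·w·u_t − ε·w·u·(u + (1/2)·x·u_x) and T^x = −u·w_x·(u + (1/2)·x·u_x + t·u_t) − (1/2)·x·w_t·u_t − t·w_t·u·u_x + (3/2)·w·u·u_x + (1/2)·ε·x·w·u·u_t. Then for all (x,t): D_t(T^t) + D_x(T^x) = (w_tt − u·w_xx − ε·u·w_t)·(u + (1/2)·x·u_x + t·u_t). -/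
open Function

section helpers
variable {f : ℝ → ℝ → ℝ}

theorem hasDerivAt_pdx (hf : ContDiff ℝ (⊤ : ℕ∞) (uncurry f)) (x t : ℝ) :
    HasDerivAt (fun y => f y t) (fderiv ℝ (uncurry f) (x, t) (1, 0)) x :=
  (hf.differentiable (by simp) (x, t)).hasFDerivAt.comp_hasDerivAt (f := fun y => (y, t)) x
    ((hasDerivAt_id x).prodMk (hasDerivAt_const x t))

theorem hasDerivAt_pdt (hf : ContDiff ℝ (⊤ : ℕ∞) (uncurry f)) (x t : ℝ) :
    HasDerivAt (fun s => f x s) (fderiv ℝ (uncurry f) (x, t) (0, 1)) t :=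
  (hf.differentiable (by simp) (x, t)).hasFDerivAt.comp_hasDerivAt (f := fun s => (x, s)) t
    ((hasDerivAt_const t x).prodMk (hasDerivAt_id t))

theorem pdx_eq (hf : ContDiff ℝ (⊤ : ℕ∞) (uncurry f)) (x t : ℝ) :
    pdx f x t = fderiv ℝ (uncurry f) (x, t) (1, 0) := (hasDerivAt_pdx hf x t).deriv

theorem pdt_eq (hf : ContDiff ℝ (⊤ : ℕ∞) (uncurry f)) (x t : ℝ) :
    pdt f x t = fderiv ℝ (uncurry f) (x, t) (0, 1) := (hasDerivAt_pdt hf x t).deriv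

theorem hasDerivAt_pdx' (hf : ContDiff ℝ (⊤ : ℕ∞) (uncurry f)) (x t : ℝ) :
    HasDerivAt (fun y => f y t) (pdx f x t) x := by
  rw [pdx_eq hf]; exact hasDerivAt_pdx hf x t

theorem hasDerivAt_pdt' (hf : ContDiff ℝ (⊤ : ℕ∞) (uncurry f)) (x t : ℝ) :
    HasDerivAt (fun s => f x s) (pdt f x t) t := by
  rw [pdt_eq hf]; exact hasDerivAt_pdt hf x t

theorem contDiff_fderiv_apply (hf : ContDiff ℝ (⊤ : ℕ∞) (uncurry f)) (v : ℝ × ℝ) :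
    ContDiff ℝ (⊤ : ℕ∞) (fun p => fderiv ℝ (uncurry f) p v) :=
  (hf.fderiv_right (by simp)).clm_apply contDiff_const

theorem contDiff_pdx (hf : ContDiff ℝ (⊤ : ℕ∞) (uncurry f)) :
    ContDiff ℝ (⊤ : ℕ∞) (uncurry (pdx f)) := by
  have : uncurry (pdx f) = fun p : ℝ × ℝ => fderiv ℝ (uncurry f) p (1, 0) := by
    funext p; exact pdx_eq hf p.1 p.2
  rw [this]; exact contDiff_fderiv_apply hf (1, 0)

theorem contDiff_pdt (hf : ContDiff ℝ (⊤ : ℕ∞) (uncurry f)) :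
    ContDiff ℝ (⊤ : ℕ∞) (uncurry (pdt f)) := by
  have : uncurry (pdt f) = fun p : ℝ × ℝ => fderiv ℝ (uncurry f) p (0, 1) := by
    funext p; exact pdt_eq hf p.1 p.2
  rw [this]; exact contDiff_fderiv_apply hf (0, 1)

theorem fderiv_apply_dir (hf : ContDiff ℝ (⊤ : ℕ∞) (uncurry f)) (p v w : ℝ × ℝ) :
    fderiv ℝ (fun q => fderiv ℝ (uncurry f) q v) p w
      = fderiv ℝ (fderiv ℝ (uncurry f)) p w v := by
  have hd : DifferentiableAt ℝ (fderiv ℝ (uncurry f)) p :=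
    (hf.fderiv_right (m := 1) (by exact WithTop.coe_le_coe.mpr le_top)).differentiable one_ne_zero p
  have h : HasFDerivAt (fun q => fderiv ℝ (uncurry f) q v)
      ((ContinuousLinearMap.apply ℝ ℝ v).comp (fderiv ℝ (fderiv ℝ (uncurry f)) p)) p :=
    (ContinuousLinearMap.apply ℝ ℝ v).hasFDerivAt.comp p hd.hasFDerivAt
  rw [h.fderiv]; rfl

theorem clairaut (hf : ContDiff ℝ (⊤ : ℕ∞) (uncurry f)) (x t : ℝ) :
    pdx (pdt f) x t = pdt (pdx f) x t := by
  have hsym : IsSymmSndFDerivAt ℝ (uncurry f) (x, t) :=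
    hf.contDiffAt.isSymmSndFDerivAt (by rw [minSmoothness_of_isRCLikeNormedField]; exact WithTop.coe_le_coe.mpr le_top)
  have h1 : uncurry (pdt f) = fun p : ℝ × ℝ => fderiv ℝ (uncurry f) p (0, 1) := by
    funext p; exact pdt_eq hf p.1 p.2
  have h2 : uncurry (pdx f) = fun p : ℝ × ℝ => fderiv ℝ (uncurry f) p (1, 0) := by
    funext p; exact pdx_eq hf p.1 p.2
  rw [pdx_eq (contDiff_pdt hf) x t, pdt_eq (contDiff_pdx hf) x t, h1, h2,
    fderiv_apply_dir hf _ _ _, fderiv_apply_dir hf _ _ _]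
  exact hsym _ _

end helpers

/-- For a solution `u` of `u_tt − (u·u_x)_x + ε·u·u_t = 0` and ANY smooth `w`, the vector
`T^t = w_t(u + (1/2)x·u_x + t·u_t) + (1/2)x·w_x·u_t + t·w_x·u·u_x − (3/2)w·u_t
       − ε·w·u·(u + (1/2)x·u_x)`,
`T^x = −u·w_x(u + (1/2)x·u_x + t·u_t) − (1/2)x·w_t·u_t − t·w_t·u·u_x + (3/2)w·u·u_x
       + (1/2)ε·x·w·u·u_t`
satisfies `D_t(T^t) + D_x(T^x) = (w_tt − u·w_xx − ε·u·w_t)·(u + (1/2)x·u_x + t·u_t)`. -/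
theorem stmt9 (ε : ℝ) (u w : ℝ → ℝ → ℝ)
    (hu : ContDiff ℝ (⊤ : ℕ∞) (Function.uncurry u))
    (hw : ContDiff ℝ (⊤ : ℕ∞) (Function.uncurry w))
    (hpde : ∀ x t : ℝ,
      pdt (pdt u) x t
        = (pdx u x t) ^ 2 + u x t * pdx (pdx u) x t - ε * u x t * pdt u x t)
    (Tt Tx : ℝ → ℝ → ℝ)
    (hTt : ∀ x t : ℝ,
      Tt x t = pdt w x t * (u x t + (1/2) * x * pdx u x t + t * pdt u x t)
        + (1/2) * x * pdx w x t * pdt u x t + t * pdx w x t * u x t * pdx u x t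
        - (3/2) * w x t * pdt u x t
        - ε * w x t * u x t * (u x t + (1/2) * x * pdx u x t))
    (hTx : ∀ x t : ℝ,
      Tx x t = -(u x t * pdx w x t * (u x t + (1/2) * x * pdx u x t + t * pdt u x t))
        - (1/2) * x * pdt w x t * pdt u x t - t * pdt w x t * u x t * pdx u x t
        + (3/2) * w x t * u x t * pdx u x t
        + (1/2) * ε * x * w x t * u x t * pdt u x t) :
    ∀ x t : ℝ,
      pdt Tt x t + pdx Tx x t
        = (pdt (pdt w) x t - u x t * pdx (pdx w) x t - ε * u x t * pdt w x t)
            * (u x t + (1/2) * x * pdx u x t + t * pdt u x t) := by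
  intro x t
  have hux := contDiff_pdx hu
  have hut := contDiff_pdt hu
  have hwx := contDiff_pdx hw
  have hwt := contDiff_pdt hw
  -- t-direction
  have hU := hasDerivAt_pdt' hu x t
  have hUx := hasDerivAt_pdt' hux x t
  have hUt := hasDerivAt_pdt' hut x t
  have hW := hasDerivAt_pdt' hw x t
  have hWx := hasDerivAt_pdt' hwx x t
  have hWt := hasDerivAt_pdt' hwt x t
  have A1 := hWt.mul ((hU.add (hUx.const_mul (1/2*x))).add ((hasDerivAt_id' t).mul hUt))
  have B1 := (hWx.const_mul (1/2*x)).mul hUt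
  have C1 := (((hasDerivAt_id' t).mul hWx).mul hU).mul hUx
  have D1 := (hW.const_mul (3/2)).mul hUt
  have E1 := ((hW.const_mul ε).mul hU).mul (hU.add (hUx.const_mul (1/2*x)))
  have H1 := (((A1.add B1).add C1).sub D1).sub E1
  have e1 : (fun s => Tt x s)
      = (fun s => pdt w x s * (u x s + 1/2 * x * pdx u x s + s * pdt u x s)
          + 1/2 * x * pdx w x s * pdt u x s + s * pdx w x s * u x s * pdx u x s
          - 3/2 * w x s * pdt u x s
          - ε * w x s * u x s * (u x s + 1/2 * x * pdx u x s)) :=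
    funext fun s => hTt x s
  -- x-direction
  have hU' := hasDerivAt_pdx' hu x t
  have hUx' := hasDerivAt_pdx' hux x t
  have hUt' := hasDerivAt_pdx' hut x t
  have hW' := hasDerivAt_pdx' hw x t
  have hWx' := hasDerivAt_pdx' hwx x t
  have hWt' := hasDerivAt_pdx' hwt x t
  have A2 := (hU'.mul hWx').mul ((hU'.add (((hasDerivAt_id' x).const_mul (1/2)).mul hUx')).add (hUt'.const_mul t))
  have B2 := (((hasDerivAt_id' x).const_mul (1/2)).mul hWt').mul hUt'
  have C2 := ((hWt'.const_mul t).mul hU').mul hUx'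
  have D2 := ((hW'.const_mul (3/2)).mul hU').mul hUx'
  have E2 := ((((hasDerivAt_id' x).const_mul (1/2*ε)).mul hW').mul hU').mul hUt'
  have H2 := (((A2.neg.sub B2).sub C2).add D2).add E2
  have e2 : (fun y => Tx y t)
      = (fun y => -(u y t * pdx w y t * (u y t + 1/2 * y * pdx u y t + t * pdt u y t))
          - 1/2 * y * pdt w y t * pdt u y t - t * pdt w y t * u y t * pdx u y t
          + 3/2 * w y t * u y t * pdx u y t
          + 1/2 * ε * y * w y t * u y t * pdt u y t) :=
    funext fun y => hTx y t
  have H1d := (H1.congr_of_eventuallyEq (f₁ := fun s => Tt x s)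
    (Filter.Eventually.of_forall fun s => hTt x s)).deriv
  have H2d := (H2.congr_of_eventuallyEq (f₁ := fun y => Tx y t)
    (Filter.Eventually.of_forall fun y => hTx y t)).deriv
  rw [show pdt Tt x t = deriv (fun s => Tt x s) t from rfl, H1d,
    show pdx Tx x t = deriv (fun y => Tx y t) x from rfl, H2d]
  simp only [Pi.mul_apply, Pi.add_apply, Pi.sub_apply, Pi.neg_apply]
  rw [clairaut hu x t, clairaut hw x t, hpde x t]
  ring
end
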